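/- (Nontriviality of the Bernstein–Sato ideal, a consequence of Theorem 4.2(i).) Let m = (m₁,…,m_r) ∈ ℕ^r be such that f₁^{m₁}⋯f_r^{m_r} is nonconstant. Then B_F^m is a proper ideal of ℂ[s₁,…,s_r]; equivalently, its zero locus Z(B_F^m) ⊆ ℂ^r is nonempty. -/

import Mathlib

set_option synthInstance.maxHeartbeats 1000000
set_option maxHeartbeats 2000000
noncomputable section
open MvPolynomial

/-! ## The ring `R = ℂ[x₁,…,xₙ]`, its localization `R_f`, and the extension of `∂/∂xᵢ`
to `R_f` (constructed via the universal property of the localization, using dual numbers;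
this is the unique extension, given by the quotient rule). -/

variable {n r : ℕ}

/-- The ring homomorphism `R → R_f[ε]`, `a ↦ a + (∂a/∂xᵢ)ε`. -/
def BSpsi (f : MvPolynomial (Fin n) ℂ) (i : Fin n) :
    MvPolynomial (Fin n) ℂ →+* TrivSqZeroExt (Localization.Away f) (Localization.Away f) where
  toFun a := ⟨algebraMap _ _ a, algebraMap _ _ (pderiv i a)⟩
  map_one' := by
    refine TrivSqZeroExt.ext ?_ ?_ <;> simp
  map_mul' a b := by
    refine TrivSqZeroExt.ext ?_ ?_
    · erw [TrivSqZeroExt.fst_mul]; exact map_mul (algebraMap _ (Localization.Away f)) a b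
    · change algebraMap _ _ (pderiv i (a * b)) = algebraMap _ (Localization.Away f) a
          • algebraMap _ (Localization.Away f) (pderiv i b)
        + MulOpposite.op (algebraMap _ (Localization.Away f) b)
          • algebraMap _ (Localization.Away f) (pderiv i a)
      rw [pderiv_mul, map_add, map_mul, map_mul]
      simp [smul_eq_mul, MulOpposite.smul_eq_mul_unop]
      ring
  map_zero' := by
    refine TrivSqZeroExt.ext ?_ ?_ <;> simp
  map_add' a b := by
    refine TrivSqZeroExt.ext ?_ ?_
    · erw [TrivSqZeroExt.fst_add]; exact map_add (algebraMap _ (Localization.Away f)) a b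
    · exact (by rw [map_add, map_add] : algebraMap _ (Localization.Away f) (pderiv i (a + b))
        = algebraMap _ _ (pderiv i a) + algebraMap _ _ (pderiv i b))

lemma BSpsi_isUnit (f : MvPolynomial (Fin n) ℂ) (i : Fin n) : IsUnit (BSpsi f i f) := by
  rw [TrivSqZeroExt.isUnit_iff_isUnit_fst]
  exact IsLocalization.Away.algebraMap_isUnit f

/-- The lift of `BSpsi` to the localization `R_f → R_f[ε]`. -/
def BSPhi (f : MvPolynomial (Fin n) ℂ) (i : Fin n) :
    Localization.Away f →+* TrivSqZeroExt (Localization.Away f) (Localization.Away f) :=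
  IsLocalization.Away.lift f (BSpsi_isUnit f i)

lemma BSPhi_algebraMap (f : MvPolynomial (Fin n) ℂ) (i : Fin n) (a : MvPolynomial (Fin n) ℂ) :
    BSPhi f i (algebraMap _ _ a) = BSpsi f i a :=
  IsLocalization.lift_eq _ _

/-- The extension of `∂/∂xᵢ` to the localization `R_f = ℂ[x₁,…,xₙ][1/f]`
(the unique extension, given by the quotient rule), as a `ℂ`-linear endomorphism. -/
def BSderiv (f : MvPolynomial (Fin n) ℂ) (i : Fin n) :
    Module.End ℂ (Localization.Away f) where
  toFun z := (BSPhi f i z).snd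
  map_add' x y := by simp
  map_smul' c z := by
    simp only [RingHom.id_apply]
    rw [show c • z = algebraMap ℂ (Localization.Away f) c * z from Algebra.smul_def c z, map_mul]
    have h1 : algebraMap ℂ (Localization.Away f) c
        = algebraMap (MvPolynomial (Fin n) ℂ) (Localization.Away f) (C c) := by
      rw [IsScalarTower.algebraMap_apply ℂ (MvPolynomial (Fin n) ℂ) (Localization.Away f)]
      simp
    rw [h1, BSPhi_algebraMap]
    rw [TrivSqZeroExt.snd_mul]
    show (algebraMap _ _ (C c)) • _ + (MulOpposite.op (BSPhi f i z).fst)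
      • (algebraMap _ _ (pderiv i (C c))) = _
    simp [Algebra.smul_def, ← h1]

/-! ## The module `M = R_f ⊗_ℂ ℂ[s₁,…,s_r] = R_f[s₁,…,s_r]` and the operators on it. -/

/-- The module `M = R_f ⊗_ℂ ℂ[s₁,…,s_r]`, realized as polynomials in `s₁,…,s_r`
with coefficients in `R_f`. -/
abbrev BSModule (r : ℕ) (f : MvPolynomial (Fin n) ℂ) :=
  MvPolynomial (Fin r) (Localization.Away f)

/-- A `ℂ`-linear endomorphism of `R_f` applied coefficientwise to `M = R_f[s₁,…,s_r]`. -/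
def coeffwise (f : MvPolynomial (Fin n) ℂ) (d : Module.End ℂ (Localization.Away f)) :
    Module.End ℂ (BSModule r f) :=
  (AddMonoidAlgebra.coeffLinearEquiv ℂ).symm.toLinearMap ∘ₗ Finsupp.mapRange.linearMap d
    ∘ₗ (AddMonoidAlgebra.coeffLinearEquiv ℂ).toLinearMap

/-- The element `(∂f_j/∂xᵢ)/f_j` of `R_f`, where `f = f₁⋯f_r`:
it is the fraction with numerator `(∂f_j/∂xᵢ)·∏_{k≠j} f_k` and denominator `f`. -/
def BSdlog (F : Fin r → MvPolynomial (Fin n) ℂ) (i : Fin n) (j : Fin r) :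
    Localization.Away (∏ k, F k) :=
  Localization.mk (pderiv i (F j) * ∏ k ∈ Finset.univ.erase j, F k)
    ⟨∏ k, F k, Submonoid.mem_powers _⟩

/-- The operator `∇ᵢ` on `M = R_f[s₁,…,s_r]`, given by
`∇ᵢ(g) = ∂g/∂xᵢ + (∑_j s_j·(∂f_j/∂xᵢ)/f_j)·g`, i.e. the natural action of `∂/∂xᵢ`
on `g·f₁^{s₁}⋯f_r^{s_r}`. -/
def BSnabla (F : Fin r → MvPolynomial (Fin n) ℂ) (i : Fin n) :
    Module.End ℂ (BSModule r (∏ k, F k)) :=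
  coeffwise _ (BSderiv (∏ k, F k) i)
    + LinearMap.mulLeft ℂ (∑ j, X j * C (BSdlog F i j))

/-- The algebra `D[s] = D_X[s₁,…,s_r]` of operators on `M`: the subalgebra of
`ℂ`-linear endomorphisms of `M` generated by the multiplication operators by elements of `R`,
the multiplication operators by the variables `s_j`, and the operators `∇ᵢ`.
(As a `ℂ`-subalgebra it is generated by these; as a `ℂ[s₁,…,s_r]`-subalgebra it is generated
by the multiplications by elements of `R` together with the `∇ᵢ`.) -/
def BSDalg (F : Fin r → MvPolynomial (Fin n) ℂ) :
    Subalgebra ℂ (Module.End ℂ (BSModule r (∏ k, F k))) :=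
  Algebra.adjoin ℂ
    ((Set.range fun a : MvPolynomial (Fin n) ℂ =>
        LinearMap.mulLeft ℂ (C (algebraMap _ (Localization.Away (∏ k, F k)) a)))
      ∪ (Set.range fun j : Fin r => LinearMap.mulLeft ℂ (X j : BSModule r (∏ k, F k)))
      ∪ (Set.range fun i : Fin n => BSnabla F i))

/-- The Bernstein–Sato ideal `B_F^m ⊆ ℂ[s₁,…,s_r]` (as a subset): all polynomials `b`
such that `b·1` lies in the `D[s]`-submodule of `M` generated by `f₁^{m₁}⋯f_r^{m_r}`,
encoding the functional equation `b(s)·f₁^{s₁}⋯f_r^{s_r} = P·f₁^{s₁+m₁}⋯f_r^{s_r+m_r}`. -/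
def BSideal (F : Fin r → MvPolynomial (Fin n) ℂ) (m : Fin r → ℕ) :
    Set (MvPolynomial (Fin r) ℂ) :=
  {b | ∃ P ∈ BSDalg F,
    P (C (algebraMap _ (Localization.Away (∏ k, F k)) (∏ j, F j ^ m j)))
      = MvPolynomial.map (algebraMap ℂ (Localization.Away (∏ k, F k))) b}

/-- The zero locus in `ℂ^r` of a set of polynomials in `ℂ[s₁,…,s_r]`. -/
def zeroLoc (B : Set (MvPolynomial (Fin r) ℂ)) : Set (Fin r → ℂ) :=
  {α | ∀ b ∈ B, eval α b = 0}

/-- The map `Exp : ℂ^r → (ℂ^*)^r`, `α ↦ exp(2πiα)` componentwise. -/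
def ExpMap (α : Fin r → ℂ) : Fin r → ℂˣ :=
  fun j => Units.mk0 (Complex.exp (2 * Real.pi * Complex.I * α j)) (Complex.exp_ne_zero _)

end

/-!
Specialise `s = -m`. Evaluating at `s = -m` turns `∇ᵢ` into `∂ᵢ - ∑ⱼ mⱼ (∂ᵢfⱼ)/fⱼ`, the
conjugate of `∂ᵢ` by `f^m := f₁^{m₁}⋯f_r^{m_r}`, so every operator of `D[s]` maps the elements
`z` of `M` with `z(-m) ∈ f^m·R` to elements of the same kind. Since `f^m` is one of them, a
functional equation `b·1 = P·f^m` gives `b(-m) ∈ f^m·R`; if `b(-m) ≠ 0` this makes `f^m` a unit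
of `R`, i.e. a constant. Hence `-m ∈ Z(B_F^m)`.
-/

open MvPolynomial

def Submodule.endStabilizer {R M : Type*} [CommSemiring R] [AddCommMonoid M] [Module R M]
    (N : Submodule R M) : Subalgebra R (Module.End R M) where
  carrier := {P | ∀ z ∈ N, P z ∈ N}
  mul_mem' hP hQ z hz := hP _ (hQ z hz)
  one_mem' _ hz := hz
  add_mem' hP hQ z hz := N.add_mem (hP z hz) (hQ z hz)
  zero_mem' _ _ := N.zero_mem
  algebraMap_mem' c _ hz := N.smul_mem c hz

namespace Derivation

variable {R A : Type*} [CommSemiring R] [CommSemiring A] [Algebra R A] (D : Derivation R A A)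

theorem map_pow_of_eq_mul {x d : A} (h : D x = x * d) (k : ℕ) :
    D (x ^ k) = x ^ k * (k * d) := by
  induction k with
  | zero => simp
  | succ k ih =>
    rw [pow_succ, leibniz, ih, h, smul_eq_mul, smul_eq_mul]
    push_cast
    ring

theorem map_prod_of_eq_mul {ι : Type*} (s : Finset ι) {y e : ι → A}
    (h : ∀ j ∈ s, D (y j) = y j * e j) : D (∏ j ∈ s, y j) = (∏ j ∈ s, y j) * ∑ j ∈ s, e j := by
  classical
  induction s using Finset.induction_on with
  | empty => simp
  | insert a s ha ih =>
    rw [Finset.prod_insert ha, Finset.sum_insert ha, leibniz, smul_eq_mul, smul_eq_mul,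
      ih fun j hj => h j (Finset.mem_insert_of_mem hj), h a (Finset.mem_insert_self a s)]
    ring

end Derivation

noncomputable section
variable {n r : ℕ}

theorem BSPhi_fst (f : MvPolynomial (Fin n) ℂ) (i : Fin n) (z : Localization.Away f) :
    (BSPhi f i z).fst = z := by
  have h : (TrivSqZeroExt.fstHom ℂ _ _).toRingHom.comp (BSPhi f i) = RingHom.id _ :=
    IsLocalization.ringHom_ext (Submonoid.powers f) <| RingHom.ext fun a =>
      congrArg TrivSqZeroExt.fst (BSPhi_algebraMap f i a)
  exact RingHom.congr_fun h z

def BSderivation (f : MvPolynomial (Fin n) ℂ) (i : Fin n) :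
    Derivation ℂ (Localization.Away f) (Localization.Away f) where
  toLinearMap := BSderiv f i
  map_one_eq_zero' := congrArg TrivSqZeroExt.snd (map_one (BSPhi f i))
  leibniz' x y := by
    change (BSPhi f i (x * y)).snd = x • (BSPhi f i y).snd + y • (BSPhi f i x).snd
    rw [map_mul, TrivSqZeroExt.snd_mul, BSPhi_fst, BSPhi_fst, MulOpposite.smul_eq_mul_unop,
      MulOpposite.unop_op, smul_eq_mul, smul_eq_mul, mul_comm y]

theorem BSderivation_algebraMap (f : MvPolynomial (Fin n) ℂ) (i : Fin n)
    (a : MvPolynomial (Fin n) ℂ) :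
    BSderivation f i (algebraMap _ _ a) = algebraMap _ _ (pderiv i a) :=
  congrArg TrivSqZeroExt.snd (BSPhi_algebraMap f i a)

theorem algebraMap_mul_BSdlog (F : Fin r → MvPolynomial (Fin n) ℂ) (i : Fin n) (j : Fin r) :
    algebraMap _ _ (F j) * BSdlog F i j
      = algebraMap _ (Localization.Away (∏ k, F k)) (pderiv i (F j)) := by
  rw [BSdlog, ← Localization.mk_one_eq_algebraMap, ← Localization.mk_one_eq_algebraMap,
    Localization.mk_mul, Localization.mk_eq_mk_iff, Localization.r_iff_exists]
  refine ⟨1, ?_⟩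
  simp only [OneMemClass.coe_one, one_mul]
  rw [← Finset.mul_prod_erase Finset.univ F (Finset.mem_univ j)]
  ring

theorem BSderivation_algebraMap_prod_pow (F : Fin r → MvPolynomial (Fin n) ℂ) (m : Fin r → ℕ)
    (i : Fin n) :
    BSderivation _ i (algebraMap _ _ (∏ j, F j ^ m j))
      = algebraMap _ _ (∏ j, F j ^ m j) * ∑ j, m j * BSdlog F i j := by
  simp only [map_prod, map_pow]
  refine (BSderivation _ i).map_prod_of_eq_mul _ fun j _ =>
    (BSderivation _ i).map_pow_of_eq_mul ?_ _
  rw [BSderivation_algebraMap, algebraMap_mul_BSdlog]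

def BSevalNeg (f : MvPolynomial (Fin n) ℂ) (m : Fin r → ℕ) :
    BSModule r f →ₐ[Localization.Away f] Localization.Away f :=
  aeval fun j => -(m j : Localization.Away f)

@[simp]
theorem BSevalNeg_C (f : MvPolynomial (Fin n) ℂ) (m : Fin r → ℕ) (a : Localization.Away f) :
    BSevalNeg f m (C a) = a :=
  aeval_C _ a

@[simp]
theorem BSevalNeg_X (f : MvPolynomial (Fin n) ℂ) (m : Fin r → ℕ) (j : Fin r) :
    BSevalNeg f m (X j) = -(m j : Localization.Away f) :=
  aeval_X _ j

theorem BSevalNeg_coeffwise (f : MvPolynomial (Fin n) ℂ) (m : Fin r → ℕ)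
    (D : Module.End ℂ (Localization.Away f)) (p : BSModule r f) :
    BSevalNeg f m (coeffwise f D p) = D (BSevalNeg f m p) := by
  induction p using MvPolynomial.induction_on' with
  | monomial s a =>
    have hcoeff : coeffwise (r := r) f D (monomial s a) = monomial s (D a) :=
      congrArg AddMonoidAlgebra.ofCoeff (Finsupp.mapRange_single (hf := D.map_zero))
    have hint : (s.prod fun j e => (-(m j : Localization.Away f)) ^ e)
        = ((s.prod fun j e => (-(m j : ℤ)) ^ e : ℤ) : Localization.Away f) := by
      simp [Finsupp.prod]
    rw [hcoeff, BSevalNeg, aeval_monomial, aeval_monomial, hint, Algebra.algebraMap_self,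
      RingHom.id_apply, RingHom.id_apply, ← zsmul_eq_mul', ← zsmul_eq_mul', map_zsmul]
  | add p q hp hq => rw [map_add, map_add, map_add, map_add, hp, hq]

theorem BSevalNeg_map (f : MvPolynomial (Fin n) ℂ) (m : Fin r → ℕ) (b : MvPolynomial (Fin r) ℂ) :
    BSevalNeg f m (map (algebraMap ℂ _) b) = algebraMap ℂ _ (eval (fun j => -(m j : ℂ)) b) := by
  rw [BSevalNeg, aeval_map_algebraMap, aeval_def, eval, coe_eval₂Hom, eval₂_comp_left,
    RingHom.comp_id]
  congr
  funext j
  simp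

theorem BSevalNeg_nabla (F : Fin r → MvPolynomial (Fin n) ℂ) (m : Fin r → ℕ) (i : Fin n)
    (z : BSModule r (∏ k, F k)) :
    BSevalNeg _ m (BSnabla F i z)
      = BSderivation _ i (BSevalNeg _ m z) - (∑ j, m j * BSdlog F i j) * BSevalNeg _ m z := by
  have hsum : BSevalNeg _ m (∑ j, X j * C (BSdlog F i j)) = -∑ j, m j * BSdlog F i j := by
    simp only [map_sum, map_mul, BSevalNeg_X, BSevalNeg_C, neg_mul, Finset.sum_neg_distrib]
  rw [BSnabla, LinearMap.add_apply, map_add, BSevalNeg_coeffwise, LinearMap.mulLeft_apply,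
    map_mul, hsum, neg_mul, ← sub_eq_add_neg]
  rfl

def BSdivisible (F : Fin r → MvPolynomial (Fin n) ℂ) (m : Fin r → ℕ) :
    Submodule ℂ (BSModule r (∏ k, F k)) :=
  (LinearMap.range ((Algebra.linearMap _ (Localization.Away (∏ k, F k))).restrictScalars ℂ
      ∘ₗ LinearMap.mulLeft ℂ (∏ j, F j ^ m j))).comap
    ((BSevalNeg _ m).toLinearMap.restrictScalars ℂ)

theorem mem_BSdivisible {F : Fin r → MvPolynomial (Fin n) ℂ} {m : Fin r → ℕ}
    {z : BSModule r (∏ k, F k)} :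
    z ∈ BSdivisible F m ↔ ∃ g, algebraMap _ _ ((∏ j, F j ^ m j) * g) = BSevalNeg _ m z :=
  Iff.rfl

theorem BSDalg_le_endStabilizer (F : Fin r → MvPolynomial (Fin n) ℂ) (m : Fin r → ℕ) :
    BSDalg F ≤ (BSdivisible F m).endStabilizer := by
  refine Algebra.adjoin_le ?_
  rintro _ ((⟨a, rfl⟩ | ⟨j, rfl⟩) | ⟨i, rfl⟩) z hz <;> obtain ⟨g, hg⟩ := mem_BSdivisible.mp hz
  · refine mem_BSdivisible.mpr ⟨a * g, ?_⟩
    rw [LinearMap.mulLeft_apply, map_mul (BSevalNeg _ m), BSevalNeg_C, ← hg]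
    simp only [map_mul]
    ring
  · refine mem_BSdivisible.mpr ⟨-(m j) * g, ?_⟩
    rw [LinearMap.mulLeft_apply, map_mul (BSevalNeg _ m), BSevalNeg_X, ← hg]
    simp only [map_mul, map_neg, map_natCast]
    ring
  · refine mem_BSdivisible.mpr ⟨pderiv i g, ?_⟩
    rw [BSevalNeg_nabla, ← hg, map_mul _ (∏ j, F j ^ m j) g, Derivation.leibniz,
      BSderivation_algebraMap_prod_pow, BSderivation_algebraMap, map_mul, smul_eq_mul, smul_eq_mul]
    ring

theorem exists_prod_pow_mul_eq_C_eval_of_mem_BSideal {F : Fin r → MvPolynomial (Fin n) ℂ}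
    (hF : ∀ j, F j ≠ 0) {m : Fin r → ℕ} {b : MvPolynomial (Fin r) ℂ} (hb : b ∈ BSideal F m) :
    ∃ g, (∏ j, F j ^ m j) * g = C (eval (fun j => -(m j : ℂ)) b) := by
  obtain ⟨P, hP, hPb⟩ := hb
  have hfm : C (algebraMap _ (Localization.Away (∏ k, F k)) (∏ j, F j ^ m j)) ∈ BSdivisible F m :=
    mem_BSdivisible.mpr ⟨1, by rw [mul_one, BSevalNeg_C]⟩
  obtain ⟨g, hg⟩ := mem_BSdivisible.mp (hPb ▸ BSDalg_le_endStabilizer F m hP _ hfm)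
  have hinj : Function.Injective (algebraMap _ (Localization.Away (∏ k, F k))) :=
    IsLocalization.injective _ <| powers_le_nonZeroDivisors_of_noZeroDivisors <|
      (Finset.prod_ne_zero_iff (s := Finset.univ)).mpr fun j _ => hF j
  refine ⟨g, hinj ?_⟩
  rw [hg, BSevalNeg_map, IsScalarTower.algebraMap_apply ℂ (MvPolynomial (Fin n) ℂ),
    algebraMap_eq]

theorem neg_mem_zeroLoc_BSideal {F : Fin r → MvPolynomial (Fin n) ℂ} (hF : ∀ j, F j ≠ 0)
    {m : Fin r → ℕ} (hm : ∀ c : ℂ, ∏ j, F j ^ m j ≠ C c) :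
    (fun j => -(m j : ℂ)) ∈ zeroLoc (BSideal F m) := by
  intro b hb
  by_contra hne
  obtain ⟨g, hg⟩ := exists_prod_pow_mul_eq_C_eval_of_mem_BSideal hF hb
  have hunit : IsUnit (∏ j, F j ^ m j) :=
    isUnit_of_mul_isUnit_left (hg ▸ (isUnit_iff_ne_zero.mpr hne).map C)
  obtain ⟨c, -, hc⟩ := isUnit_iff_eq_C_of_isReduced.mp hunit
  exact hm c hc

end

open MvPolynomial in
theorem generalized_bernstein_sato_ideal_is_proper_general
    {n r : ℕ}
    (F : Fin r → MvPolynomial (Fin n) ℂ) (hF : ∀ j, F j ≠ 0)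
    (m : Fin r → ℕ) (hm : ∀ c : ℂ, ∏ j, F j ^ m j ≠ C c) :
    BSideal F m ≠ Set.univ ∧ (zeroLoc (BSideal F m)).Nonempty := by
  have hzero := neg_mem_zeroLoc_BSideal hF hm
  refine ⟨fun h => ?_, _, hzero⟩
  simpa using hzero 1 (h ▸ trivial)

open MvPolynomial in
/-- **Nontriviality of the Bernstein–Sato ideal (consequence of Theorem 4.2(i)).**
For `m ∈ ℕ^r` with `f₁^{m₁}⋯f_r^{m_r}` nonconstant, `B_F^m` is a proper ideal of
`ℂ[s₁,…,s_r]`; equivalently, its zero locus `Z(B_F^m) ⊆ ℂ^r` is nonempty. -/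
theorem generalized_bernstein_sato_ideal_is_proper
    {n r : ℕ} (hn : 1 ≤ n) (hr : 1 ≤ r)
    (F : Fin r → MvPolynomial (Fin n) ℂ) (hF : ∀ j, F j ≠ 0)
    (m : Fin r → ℕ) (hm : ∀ c : ℂ, ∏ j, F j ^ m j ≠ C c) :
    BSideal F m ≠ Set.univ ∧ (zeroLoc (BSideal F m)).Nonempty :=
  generalized_bernstein_sato_ideal_is_proper_general F hF m hm
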